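/- For all natural numbers n, k and d ≥ 1, the number of n×k lonesum 01 matrices having no all-zero column and no all-zero row in which every column vector occurs at most d times among the k columns (with no restriction on row multiplicities) equals ∑_{m=0}^{min(n,k)} m! · S(n,m) · m! · S(k,m)_{≤d}. -/

import Mathlib

open Finset

/-- A 01 matrix (encoded with `Bool` entries) is lonesum iff it avoids the
two 2×2 permutation submatrices. -/
def Lonesum {n k : ℕ} (M : Fin n → Fin k → Bool) : Prop :=
  ∀ i i' : Fin n, ∀ j j' : Fin k, i < i' → j < j' →
    ¬(M i j = true ∧ M i j' = false ∧ M i' j = false ∧ M i' j' = true) ∧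
    ¬(M i j = false ∧ M i j' = true ∧ M i' j = true ∧ M i' j' = false)

/-- The `j`-th column of a 01 matrix. -/
def colOf {n k : ℕ} (M : Fin n → Fin k → Bool) (j : Fin k) : Fin n → Bool :=
  fun i => M i j

/-- The restricted Stirling number of the second kind `S(n,m)_{≤ d}`. -/
noncomputable def restrictedStirling (n m d : ℕ) : ℕ :=
  Nat.card {P : Finpartition (univ : Finset (Fin n)) //
    P.parts.card = m ∧ ∀ b ∈ P.parts, b.card ≤ d}

/-- The Stirling number of the second kind `S(n,m)`. -/
noncomputable def stirling (n m : ℕ) : ℕ :=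
  Nat.card {P : Finpartition (univ : Finset (Fin n)) // P.parts.card = m}

/-!
The columns of a lonesum matrix are pairwise comparable: two incomparable columns would contain
one of the two forbidden 2×2 patterns. A 01 matrix with no zero row or column whose column supports
form a chain of `m` distinct sets is therefore a threshold matrix `M i j = [φ i ≤ ψ j]` for a unique
pair of surjections `φ : [n] → [m]`, `ψ : [k] → [m]`, and two columns agree iff their `ψ`-values
agree, so the bound on column multiplicities says that the fibres of `ψ` have at most `d` elements.
A surjection onto `[m]` is a partition into `m` blocks together with a numbering of the blocks,
which produces the factors `m! S(n,m)` and `m! S(k,m)_{≤d}`.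
-/

open Function

theorem Function.Surjective.exists_equiv_comp_eq {α β γ : Type*} {π : α → β} {f : α → γ}
    (hπ : Surjective π) (hf : Surjective f) (h : ∀ a b, π a = π b ↔ f a = f b) :
    ∃ e : β ≃ γ, e ∘ π = f := by
  have hcomp : ∀ a, f (surjInv hπ (π a)) = f a := fun a => (h _ _).1 (surjInv_eq hπ _)
  refine ⟨Equiv.ofBijective (f ∘ surjInv hπ) ⟨fun x y hxy => ?_, fun c => ?_⟩, funext hcomp⟩
  · simpa only [surjInv_eq] using (h _ _).2 hxy
  · obtain ⟨a, rfl⟩ := hf c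
    exact ⟨π a, hcomp a⟩

theorem Function.Surjective.exists_orderIso_comp_eq {β γ γ' : Type*} [LinearOrder γ]
    [LinearOrder γ'] {f : β → γ} {g : β → γ'} (hf : Surjective f) (hg : Surjective g)
    (h : ∀ a b, f a ≤ f b ↔ g a ≤ g b) : ∃ e : γ ≃o γ', e ∘ f = g := by
  obtain ⟨e, he⟩ := hf.exists_equiv_comp_eq hg fun a b => by simp only [le_antisymm_iff, h]
  refine ⟨⟨e, fun {x y} => ?_⟩, he⟩
  obtain ⟨a, rfl⟩ := hf x
  obtain ⟨b, rfl⟩ := hf y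
  simpa only [← comp_apply (f := e), he] using (h a b).symm

namespace Finpartition

variable {α : Type*} [Fintype α] [DecidableEq α] (P : Finpartition (univ : Finset α))

def partOf (a : α) : P.parts := ⟨P.part a, P.part_mem.2 (mem_univ a)⟩

theorem partOf_eq_iff {a : α} {b : P.parts} : P.partOf a = b ↔ a ∈ b.1 :=
  Subtype.ext_iff.trans (P.part_eq_iff_mem b.2)

theorem partOf_surjective : Surjective P.partOf := fun b =>
  (P.nonempty_of_mem_parts b.2).imp fun _ => P.partOf_eq_iff.2

theorem filter_partOf_eq (b : P.parts) : ({a | P.partOf a = b} : Finset α) = b.1 := by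
  ext a
  simp [partOf_eq_iff]

variable {γ : Type*} [DecidableEq γ]

theorem filter_comp_partOf_eq (e : P.parts ≃ γ) (c : γ) :
    ({a | e (P.partOf a) = c} : Finset α) = (e.symm c).1 := by
  simp only [← Equiv.eq_symm_apply, P.filter_partOf_eq]

theorem parts_eq_image_filter_comp_partOf [Fintype γ] (e : P.parts ≃ γ) :
    P.parts = univ.image fun c => ({a | e (P.partOf a) = c} : Finset α) := by
  ext b
  simp only [filter_comp_partOf_eq, mem_image, mem_univ, true_and]
  exact ⟨fun hb => ⟨e ⟨b, hb⟩, by simp⟩, by rintro ⟨c, rfl⟩; exact (e.symm c).2⟩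

theorem eq_of_comp_partOf_eq [Fintype γ] {P P' : Finpartition (univ : Finset α)}
    {e : P.parts ≃ γ} {e' : P'.parts ≃ γ} (h : e ∘ P.partOf = e' ∘ P'.partOf) : P = P' := by
  ext : 1
  rw [P.parts_eq_image_filter_comp_partOf e, P'.parts_eq_image_filter_comp_partOf e']
  simp only [← comp_apply (f := e), h]
  rfl

theorem exists_equiv_comp_partOf_eq {f : α → γ} (hf : Surjective f) :
    ∃ (P : Finpartition (univ : Finset α)) (e : P.parts ≃ γ), e ∘ P.partOf = f := by
  classical
  let P := ofSetoid (Setoid.ker f)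
  have hP (a b : α) : P.partOf a = P.partOf b ↔ f a = f b := by
    rw [partOf_eq_iff]
    exact mem_part_ofSetoid_iff_rel.trans eq_comm
  obtain ⟨e, he⟩ := P.partOf_surjective.exists_equiv_comp_eq hf hP
  exact ⟨P, e, he⟩

end Finpartition

section Surjections

variable {α γ : Type*} [Fintype α] [DecidableEq α] [Fintype γ] [DecidableEq γ]

theorem card_surjective_and_fiber_card (Q : ℕ → Prop) :
    Nat.card {f : α → γ // Surjective f ∧ ∀ c, Q #{a | f a = c}} =
      (Fintype.card γ).factorial * Nat.card {P : Finpartition (univ : Finset α) //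
        #P.parts = Fintype.card γ ∧ ∀ b ∈ P.parts, Q #b} := by
  classical
  set Y := {P : Finpartition (univ : Finset α) // #P.parts = Fintype.card γ ∧ ∀ b ∈ P.parts, Q #b}
  let g : (Σ P : Y, P.1.parts ≃ γ) → {f : α → γ // Surjective f ∧ ∀ c, Q #{a | f a = c}} :=
    fun ⟨P, e⟩ => ⟨e ∘ P.1.partOf, e.surjective.comp P.1.partOf_surjective, fun c => by
      simpa only [comp_apply, Finpartition.filter_comp_partOf_eq] using P.2.2 _ (e.symm c).2⟩
  have hg : Bijective g := by
    refine ⟨?_, ?_⟩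
    · rintro ⟨⟨P, _⟩, e⟩ ⟨⟨P', _⟩, e'⟩ h
      have hfe : e ∘ P.partOf = e' ∘ P'.partOf := congrArg Subtype.val h
      obtain rfl : P = P' := Finpartition.eq_of_comp_partOf_eq hfe
      obtain rfl : e = e' := Equiv.ext (congrFun (P.partOf_surjective.injective_comp_right hfe))
      rfl
    · rintro ⟨f, hf, hQ⟩
      obtain ⟨P, e, rfl⟩ := Finpartition.exists_equiv_comp_partOf_eq hf
      refine ⟨⟨⟨P, ?_, fun b hb => ?_⟩, e⟩, rfl⟩
      · rw [← Fintype.card_coe, Fintype.card_congr e]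
      · simpa [Finpartition.filter_partOf_eq] using hQ (e ⟨b, hb⟩)
  have hcard (P : Y) : Nat.card (P.1.parts ≃ γ) = (Fintype.card γ).factorial := by
    have hP : Fintype.card P.1.parts = Fintype.card γ := by rw [Fintype.card_coe, P.2.1]
    rw [Nat.card_eq_fintype_card, Fintype.card_equiv (Fintype.equivOfCardEq hP), hP]
  rw [← Nat.card_eq_of_bijective g hg, Nat.card_sigma, sum_congr rfl fun P _ => hcard P,
    sum_const, card_univ, smul_eq_mul, mul_comm, Nat.card_eq_fintype_card]

theorem card_surjective :
    Nat.card {f : α → γ // Surjective f} = (Fintype.card γ).factorial *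
      Nat.card {P : Finpartition (univ : Finset α) // #P.parts = Fintype.card γ} := by
  simpa using card_surjective_and_fiber_card (α := α) (γ := γ) fun _ => True

end Surjections

section Threshold

variable {α β γ : Type*} [LinearOrder γ]

def threshold (φ : α → γ) (ψ : β → γ) (i : α) (j : β) : Bool := decide (φ i ≤ ψ j)

theorem lonesum_threshold {n k : ℕ} (φ : Fin n → γ) (ψ : Fin k → γ) :
    Lonesum (threshold φ ψ) := by
  intro i i' j j' _ _
  simp only [threshold, decide_eq_true_eq, decide_eq_false_iff_not, not_le]
  constructor
  · rintro ⟨h₁, h₂, h₃, h₄⟩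
    exact lt_irrefl _ (h₂.trans_le h₁ |>.trans h₃ |>.trans_le h₄)
  · rintro ⟨h₁, h₂, h₃, h₄⟩
    exact lt_irrefl _ (h₁.trans_le h₂ |>.trans h₄ |>.trans_le h₃)

theorem threshold_col_le_iff {φ : α → γ} (hφ : Surjective φ) (ψ : β → γ) (j j' : β) :
    (fun i => threshold φ ψ i j) ≤ (fun i => threshold φ ψ i j') ↔ ψ j ≤ ψ j' := by
  simp only [Pi.le_def, Bool.le_iff_imp, threshold, decide_eq_true_eq]
  refine ⟨fun h => ?_, fun h i hi => hi.trans h⟩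
  obtain ⟨i, hi⟩ := hφ (ψ j)
  exact hi ▸ h i hi.le

theorem threshold_col_eq_iff {φ : α → γ} (hφ : Surjective φ) (ψ : β → γ) (j j' : β) :
    (fun i => threshold φ ψ i j) = (fun i => threshold φ ψ i j') ↔ ψ j = ψ j' := by
  simp only [le_antisymm_iff, threshold_col_le_iff hφ]

theorem threshold_left_injective {φ φ' : α → γ} {ψ : β → γ} (hψ : Surjective ψ)
    (h : threshold φ ψ = threshold φ' ψ) : φ = φ' := by
  have key (i : α) (c : γ) : φ i ≤ c ↔ φ' i ≤ c := by
    obtain ⟨j, rfl⟩ := hψ c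
    simpa [threshold] using congrFun (congrFun h i) j
  exact funext fun i => le_antisymm ((key i _).2 le_rfl) ((key i _).1 le_rfl)

theorem exists_threshold_eq_true_left {φ : α → γ} (hφ : Surjective φ) (ψ : β → γ) (j : β) :
    ∃ i, threshold φ ψ i j = true :=
  (hφ (ψ j)).imp fun _ hi => by simp [threshold, hi]

theorem exists_threshold_eq_true_right (φ : α → γ) {ψ : β → γ} (hψ : Surjective ψ) (i : α) :
    ∃ j, threshold φ ψ i j = true :=
  (hψ (φ i)).imp fun _ hj => by simp [threshold, hj]

end Threshold

theorem Finset.card_le_card_iff_subset_of_total {α : Type*} {s t : Finset α}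
    (h : s ⊆ t ∨ t ⊆ s) : #s ≤ #t ↔ s ⊆ t := by
  refine ⟨fun hst => h.elim id fun hts => ?_, card_le_card⟩
  exact (eq_of_subset_of_card_le hts hst).symm.subset

section Chain

variable {α β : Type*} [Fintype β] {S : β → Finset α}

theorem exists_mem_forall_subset_of_total (hS : ∀ j j', S j ⊆ S j' ∨ S j' ⊆ S j) {j : β}
    (hj : (S j).Nonempty) : ∃ i ∈ S j, ∀ j', i ∈ S j' → S j ⊆ S j' := by
  classical
  by_cases hT : ({j' | ¬S j ⊆ S j'} : Finset β).Nonempty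
  · obtain ⟨j₀, hj₀, hmax⟩ := exists_max_image _ (fun j' => #(S j')) hT
    simp only [mem_filter, mem_univ, true_and] at hj₀ hmax
    have hlt : S j₀ ⊂ S j := ssubset_of_subset_not_subset ((hS j j₀).resolve_left hj₀) hj₀
    obtain ⟨i, hi, hi₀⟩ := exists_of_ssubset hlt
    refine ⟨i, hi, fun j' hij' => by_contra fun hj' => hi₀ ?_⟩
    exact (card_le_card_iff_subset_of_total (hS j' j₀)).1 (hmax j' hj') hij'
  · obtain ⟨i, hi⟩ := hj
    refine ⟨i, hi, fun j' _ => by_contra fun hj' => hT ⟨j', ?_⟩⟩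
    simpa using hj'

theorem exists_fin_le_iff_of_range_eq {γ : Type*} [LinearOrder γ] {u : α → γ} {v : β → γ}
    (h : Set.range u = Set.range v) : ∃ (m : ℕ) (φ : α → Fin m) (ψ : β → Fin m),
      Surjective φ ∧ Surjective ψ ∧ ∀ i j, φ i ≤ ψ j ↔ u i ≤ v j := by
  let e := ((univ.image v).orderIsoOfFin rfl).symm
  have hu (i : α) : u i ∈ univ.image v := by simpa [← Set.mem_range, ← h] using ⟨i, rfl⟩
  refine ⟨_, fun i => e ⟨u i, hu i⟩, fun j => e ⟨v j, mem_image_of_mem v (mem_univ j)⟩,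
    ?_, ?_, fun i j => by simp⟩
  · intro t
    obtain ⟨j, -, hj⟩ := mem_image.1 (e.symm t).2
    obtain ⟨i, hi⟩ : v j ∈ Set.range u := h ▸ ⟨j, rfl⟩
    exact ⟨i, e.symm.injective (by simpa [Subtype.ext_iff, hi] using hj)⟩
  · intro t
    obtain ⟨j, -, hj⟩ := mem_image.1 (e.symm t).2
    exact ⟨j, e.symm.injective (by simpa [Subtype.ext_iff] using hj)⟩

theorem exists_fin_mem_iff_le_of_total [DecidableEq α] (hS : ∀ j j', S j ⊆ S j' ∨ S j' ⊆ S j)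
    (hne : ∀ j, (S j).Nonempty) (hcover : ∀ i, ∃ j, i ∈ S j) :
    ∃ (m : ℕ) (φ : α → Fin m) (ψ : β → Fin m),
      Surjective φ ∧ Surjective ψ ∧ ∀ i j, i ∈ S j ↔ φ i ≤ ψ j := by
  let w (j : β) := #(S j)
  have hw (j j' : β) : w j ≤ w j' ↔ S j ⊆ S j' := card_le_card_iff_subset_of_total (hS j j')
  have hne_key (i : α) : (({j | i ∈ S j} : Finset β).image w).Nonempty :=
    let ⟨j, hj⟩ := hcover i; ⟨w j, mem_image_of_mem w (by simpa using hj)⟩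
  let key (i : α) := (({j | i ∈ S j} : Finset β).image w).min' (hne_key i)
  have hkey_mem (i : α) : ∃ j, i ∈ S j ∧ w j = key i := by
    simpa using min'_mem _ (hne_key i)
  have hkey (i : α) (j : β) : i ∈ S j ↔ key i ≤ w j := by
    refine ⟨fun hij => min'_le _ _ (mem_image_of_mem w (by simpa using hij)), fun hle => ?_⟩
    obtain ⟨j₀, hj₀, he⟩ := hkey_mem i
    exact (hw j₀ j).1 (he ▸ hle) hj₀
  have hrange : Set.range key = Set.range w := by
    ext x
    constructor
    · rintro ⟨i, rfl⟩
      obtain ⟨j₀, -, he⟩ := hkey_mem i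
      exact ⟨j₀, he⟩
    · rintro ⟨j, rfl⟩
      obtain ⟨i, hi, hmin⟩ := exists_mem_forall_subset_of_total hS (hne j)
      obtain ⟨j₀, hj₀, he⟩ := hkey_mem i
      exact ⟨i, le_antisymm ((hkey i j).1 hi) (he ▸ (hw j j₀).2 (hmin j₀ hj₀))⟩
  obtain ⟨m, φ, ψ, hφ, hψ, hle⟩ := exists_fin_le_iff_of_range_eq hrange
  exact ⟨m, φ, ψ, hφ, hψ, fun i j => (hkey i j).trans (hle i j).symm⟩

end Chain

namespace Lonesum

variable {n k : ℕ} {M : Fin n → Fin k → Bool}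

theorem false_of_crossing (hL : Lonesum M) {i i' : Fin n} {j j' : Fin k} (h₁ : M i j = true)
    (h₂ : M i j' = false) (h₃ : M i' j = false) (h₄ : M i' j' = true) : False := by
  have hi : i ≠ i' := by rintro rfl; simp_all
  have hj : j ≠ j' := by rintro rfl; simp_all
  rcases hi.lt_or_gt with hi | hi <;> rcases hj.lt_or_gt with hj | hj
  · exact (hL i i' j j' hi hj).1 ⟨h₁, h₂, h₃, h₄⟩
  · exact (hL i i' j' j hi hj).2 ⟨h₂, h₁, h₄, h₃⟩
  · exact (hL i' i j j' hi hj).2 ⟨h₃, h₄, h₁, h₂⟩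
  · exact (hL i' i j' j hi hj).1 ⟨h₄, h₃, h₂, h₁⟩

theorem filter_subset_or_subset (hL : Lonesum M) (j j' : Fin k) :
    ({i | M i j = true} : Finset (Fin n)) ⊆ ({i | M i j' = true} : Finset (Fin n)) ∨
      ({i | M i j' = true} : Finset (Fin n)) ⊆ ({i | M i j = true} : Finset (Fin n)) := by
  by_contra! h
  obtain ⟨i, hi, hi'⟩ := not_subset.1 h.1
  obtain ⟨i', hi'', hi'''⟩ := not_subset.1 h.2
  simp only [mem_filter, mem_univ, true_and] at hi hi' hi'' hi'''
  exact hL.false_of_crossing hi (Bool.eq_false_iff.2 hi') (Bool.eq_false_iff.2 hi''') hi''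

end Lonesum

theorem card_filter_colOf_threshold {n k : ℕ} {γ : Type*} [LinearOrder γ] {φ : Fin n → γ}
    (hφ : Surjective φ) (ψ : Fin k → γ) (j : Fin k) :
    #{j' | colOf (threshold φ ψ) j' = colOf (threshold φ ψ) j} = #{j' | ψ j' = ψ j} := by
  congr 1
  exact filter_congr fun j' _ => threshold_col_eq_iff hφ ψ j' j

def thresholdMatrix (n k d : ℕ) :
    (Σ m : Fin (min n k + 1), {φ : Fin n → Fin m // Surjective φ} ×
      {ψ : Fin k → Fin m // Surjective ψ ∧ ∀ t, #{j | ψ j = t} ≤ d}) →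
    {M : Fin n → Fin k → Bool // Lonesum M ∧ (∀ j, ∃ i, M i j = true) ∧
      (∀ i, ∃ j, M i j = true) ∧ ∀ j, #{j' | colOf M j' = colOf M j} ≤ d} :=
  fun ⟨_, ⟨φ, hφ⟩, ⟨ψ, hψ, hd⟩⟩ => ⟨threshold φ ψ, lonesum_threshold φ ψ,
    exists_threshold_eq_true_left hφ ψ, exists_threshold_eq_true_right φ hψ,
    fun j => (card_filter_colOf_threshold hφ ψ j).trans_le (hd _)⟩

variable {n k d : ℕ}

theorem thresholdMatrix_injective : Injective (thresholdMatrix n k d) := by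
  rintro ⟨m₁, ⟨φ₁, hφ₁⟩, ⟨ψ₁, hψ₁, _⟩⟩ ⟨m₂, ⟨φ₂, hφ₂⟩, ⟨ψ₂, hψ₂, _⟩⟩ h
  have hM : threshold φ₁ ψ₁ = threshold φ₂ ψ₂ := congrArg Subtype.val h
  obtain ⟨e, he⟩ := hψ₁.exists_orderIso_comp_eq hψ₂ fun j j' => by
    rw [← threshold_col_le_iff hφ₁, ← threshold_col_le_iff hφ₂, hM]
  obtain rfl : m₁ = m₂ := Fin.ext (by simpa using Fintype.card_congr e.toEquiv)
  obtain rfl : ψ₁ = ψ₂ := he ▸ funext fun j => Fin.ext (Fin.coe_orderIso_apply e (ψ₁ j)).symm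
  obtain rfl : φ₁ = φ₂ := threshold_left_injective hψ₁ hM
  rfl

theorem thresholdMatrix_surjective : Surjective (thresholdMatrix n k d) := by
  rintro ⟨M, hL, hcol, hrow, hd⟩
  obtain ⟨m, φ, ψ, hφ, hψ, hM⟩ := exists_fin_mem_iff_le_of_total
    (S := fun j => ({i | M i j = true} : Finset (Fin n))) hL.filter_subset_or_subset
    (fun j => by simpa [filter_nonempty_iff] using hcol j) (fun i => by simpa using hrow i)
  obtain rfl : threshold φ ψ = M := funext₂ fun i j =>
    Bool.eq_iff_iff.2 (by simpa [threshold] using (hM i j).symm)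
  have hm : m < min n k + 1 := Nat.lt_succ_of_le <| le_min
    (by simpa using Fintype.card_le_of_surjective φ hφ)
    (by simpa using Fintype.card_le_of_surjective ψ hψ)
  refine ⟨⟨⟨m, hm⟩, ⟨φ, hφ⟩, ⟨ψ, hψ, fun t => ?_⟩⟩, rfl⟩
  obtain ⟨j, rfl⟩ := hψ t
  exact (card_filter_colOf_threshold hφ ψ j).symm.trans_le (hd j)

theorem card_lonesum_col_restricted_general (n k d : ℕ) :
    Nat.card {M : Fin n → Fin k → Bool // Lonesum M ∧
        (∀ j, ∃ i, M i j = true) ∧ (∀ i, ∃ j, M i j = true) ∧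
        (∀ j, (univ.filter fun j' => colOf M j' = colOf M j).card ≤ d)} =
      ∑ m ∈ Finset.range (min n k + 1),
        m.factorial * stirling n m * (m.factorial * restrictedStirling k m d) := by
  rw [← Nat.card_eq_of_bijective _ ⟨thresholdMatrix_injective, thresholdMatrix_surjective⟩,
    Nat.card_sigma, Finset.sum_range]
  refine Fintype.sum_congr _ _ fun m => ?_
  rw [Nat.card_prod, card_surjective, card_surjective_and_fiber_card (· ≤ d)]
  simp [stirling, restrictedStirling]

/-- The number of `n × k` lonesum 01 matrices with no all-zero column and no
all-zero row in which every column vector occurs at most `d` times among the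
columns (no restriction on row multiplicities) equals
`∑_{m=0}^{min(n,k)} m!·S(n,m)·m!·S(k,m)_{≤d}`. -/
theorem card_lonesum_col_restricted (n k d : ℕ) (hd : 1 ≤ d) :
    Nat.card {M : Fin n → Fin k → Bool // Lonesum M ∧
        (∀ j, ∃ i, M i j = true) ∧ (∀ i, ∃ j, M i j = true) ∧
        (∀ j, (univ.filter fun j' => colOf M j' = colOf M j).card ≤ d)} =
      ∑ m ∈ Finset.range (min n k + 1),
        m.factorial * stirling n m * (m.factorial * restrictedStirling k m d) :=
  card_lonesum_col_restricted_general n k d
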